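/- arXiv:2011.03655 — 2 statements merged into one kernel-verified Lean document; each statement's English description precedes it below -/
import Mathlib

section
/- Let Θ ⊆ ℝ^d be compact with positive Lebesgue measure, X a metric space, ν a σ-finite measure on X, and q : Θ × X → ℝ such that (i) for every θ ∈ Θ, q(θ,·) is a probability density with respect to ν, (ii) q is C′-Lipschitz on (Θ × X, ‖·‖ + d_X), and (iii) log q is bounded. For priors π absolutely continuous with respect to Lebesgue measure on Θ with density h_π, the posterior Post(x,π) is absolutely continuous with density proportional to θ ↦ h_π(θ) q(θ,x). Then for every set E of absolutely continuous priors on Θ with sup_{π ∈ E} ‖h_π‖_∞ < ∞, the map (x,π) ↦ Post(x,π) from (X × E, d_X + d_sup) to the absolutely continuous probability measures on Θ with metric d_sup is Lipschitz continuous, where d_sup(μ,ν) = ‖h_μ − h_ν‖_∞. Moreover, if h_π is Lipschitz then the posterior density θ ↦ h_π(θ) q(θ,x) / ∫ h_π q(·,x) dLeb is Lipschitz. -/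
/-!
Since `h` is a probability density and `q ≥ c₁`, every normalising constant
`Z = ∫ h q(·, x)` is at least `c₁`. With `f = h q(·, x)` and `f' = h' q(·, x')`,
`f / Z - f' / Z' = (f - f') / Z + f' (Z' - Z) / (Z Z')`, and `|f - f'|` is bounded a.e. by
`c₂ ‖h - h'‖_∞ + N C' d(x, x')`, hence `|Z - Z'|` by the same quantity times `vol Θ < ∞`.
For the second part, a Lipschitz prior density is bounded on the compact `Θ`, and a product of
bounded Lipschitz functions is Lipschitz.
-/

open MeasureTheory

/-- Lebesgue measure on a subset of Euclidean space, viewed as a measure on the subtype. -/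
noncomputable def lebOn {d : ℕ} (Θ : Set (EuclideanSpace ℝ (Fin d))) : Measure ↥Θ :=
  (volume : Measure (EuclideanSpace ℝ (Fin d))).comap Subtype.val

/-- The posterior density associated with a prior density `h` and observation `x`:
`θ ↦ h θ * q θ x / ∫ h q(·,x) dLeb`. -/
noncomputable def postDens {d : ℕ} {Θ : Set (EuclideanSpace ℝ (Fin d))} {X : Type*}
    (q : ↥Θ → X → ℝ) (h : ↥Θ → ℝ) (x : X) (θ : ↥Θ) : ℝ :=
  h θ * q θ x / ∫ t, h t * q t x ∂(lebOn Θ)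

open Set Filter
open scoped NNReal ENNReal

section EssSup

variable {α E : Type*} [MeasurableSpace α] {μ : Measure α} [NormedAddCommGroup E] {f : α → E}

theorem ae_norm_le_of_eLpNorm_top_le {C : ℝ≥0} (hf : eLpNorm f ⊤ μ ≤ C) :
    ∀ᵐ x ∂μ, ‖f x‖ ≤ C := by
  filter_upwards [ae_le_eLpNormEssSup (f := f) (μ := μ)] with x hx
  rw [← eLpNorm_exponent_top] at hx
  exact_mod_cast (hx.trans hf : ‖f x‖ₑ ≤ C)

theorem ae_norm_le_toReal_eLpNorm_top (hf : eLpNorm f ⊤ μ ≠ ⊤) :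
    ∀ᵐ x ∂μ, ‖f x‖ ≤ (eLpNorm f ⊤ μ).toReal :=
  ae_norm_le_of_eLpNorm_top_le (C := (eLpNorm f ⊤ μ).toNNReal)
    (ENNReal.coe_toNNReal hf).ge

theorem toReal_eLpNorm_top_le_of_ae_bound {C : ℝ} (hC : 0 ≤ C) (hf : ∀ᵐ x ∂μ, ‖f x‖ ≤ C) :
    (eLpNorm f ⊤ μ).toReal ≤ C :=
  ENNReal.toReal_le_of_le_ofReal hC <| by
    rw [eLpNorm_exponent_top]
    exact eLpNormEssSup_le_of_ae_bound hf

end EssSup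

section Density

variable {α : Type*} [MeasurableSpace α] {μ : Measure α} {h g : α → ℝ}

theorem integrable_of_lintegral_ofReal_eq_one (hm : AEStronglyMeasurable h μ)
    (h0 : 0 ≤ᵐ[μ] h) (h1 : ∫⁻ x, ENNReal.ofReal (h x) ∂μ = 1) : Integrable h μ :=
  ⟨hm, (hasFiniteIntegral_iff_ofReal h0).2 (h1 ▸ ENNReal.one_lt_top)⟩

theorem integral_eq_one_of_lintegral_ofReal_eq_one (hm : AEStronglyMeasurable h μ)
    (h0 : 0 ≤ᵐ[μ] h) (h1 : ∫⁻ x, ENNReal.ofReal (h x) ∂μ = 1) : ∫ x, h x ∂μ = 1 := by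
  rw [integral_eq_lintegral_of_nonneg_ae h0 hm, h1, ENNReal.toReal_one]

theorem le_integral_mul_of_le {c : ℝ} (hh : Integrable h μ) (h0 : 0 ≤ᵐ[μ] h)
    (h1 : ∫ x, h x ∂μ = 1) (hhg : Integrable (fun x => h x * g x) μ) (hg : ∀ᵐ x ∂μ, c ≤ g x) :
    c ≤ ∫ x, h x * g x ∂μ :=
  calc c = ∫ x, h x * c ∂μ := by rw [integral_mul_const, h1, one_mul]
    _ ≤ ∫ x, h x * g x ∂μ := integral_mono_ae (hh.mul_const c) hhg <| by
        filter_upwards [h0, hg] with x h0x hgx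
        exact mul_le_mul_of_nonneg_left hgx h0x

end Density

theorem abs_div_sub_div_le {a a' Z Z' c A B E : ℝ} (hc : 0 < c) (hZ : c ≤ Z) (hZ' : c ≤ Z')
    (ha : |a - a'| ≤ A) (ha' : |a'| ≤ B) (hE : |Z - Z'| ≤ E) :
    |a / Z - a' / Z'| ≤ A / c + B * E / c ^ 2 := by
  have hZ0 : 0 < Z := hc.trans_le hZ
  have hZ0' : 0 < Z' := hc.trans_le hZ'
  have hsplit : a / Z - a' / Z' = (a - a') / Z + a' * (Z' - Z) / (Z * Z') := by
    field_simp
    ring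
  have hA : 0 ≤ A := (abs_nonneg _).trans ha
  have hB : 0 ≤ B := (abs_nonneg _).trans ha'
  have hE0 : 0 ≤ E := (abs_nonneg _).trans hE
  calc |a / Z - a' / Z'| ≤ |(a - a') / Z| + |a' * (Z' - Z) / (Z * Z')| := by
        rw [hsplit]
        exact abs_add_le _ _
    _ = |a - a'| / Z + |a'| * |Z - Z'| / (Z * Z') := by
        rw [abs_div, abs_div, abs_mul, abs_sub_comm Z', abs_of_pos hZ0,
          abs_of_pos (mul_pos hZ0 hZ0')]
    _ ≤ A / c + B * E / (c * c) := by gcongr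
    _ = A / c + B * E / c ^ 2 := by rw [sq]

theorem ae_abs_div_integral_sub_div_integral_le {α : Type*} [MeasurableSpace α]
    {μ : Measure α} [IsFiniteMeasure μ] {f f' : α → ℝ} {c A B : ℝ} (hf : Integrable f μ)
    (hf' : Integrable f' μ) (hc : 0 < c) (hZ : c ≤ ∫ x, f x ∂μ) (hZ' : c ≤ ∫ x, f' x ∂μ)
    (hA : ∀ᵐ x ∂μ, |f x - f' x| ≤ A) (hB : ∀ᵐ x ∂μ, |f' x| ≤ B) :
    ∀ᵐ x ∂μ, |f x / ∫ t, f t ∂μ - f' x / ∫ t, f' t ∂μ| ≤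
      A / c + B * (A * μ.real univ) / c ^ 2 := by
  have hE : |∫ t, f t ∂μ - ∫ t, f' t ∂μ| ≤ A * μ.real univ := by
    rw [← integral_sub hf hf']
    exact norm_integral_le_of_norm_le_const (f := fun x => f x - f' x) hA
  filter_upwards [hA, hB] with x hAx hBx
  exact abs_div_sub_div_le hc hZ hZ' hAx hBx hE

theorem toReal_eLpNorm_posterior_sub_le {α X : Type*} [MeasurableSpace α] {μ : Measure α}
    [IsFiniteMeasure μ] [PseudoMetricSpace X] {q : α → X → ℝ} {h h' : α → ℝ} {c₁ : ℝ}
    {M N Kq : ℝ≥0} (hc₁ : 0 < c₁) (hq₁ : ∀ θ x, c₁ ≤ q θ x) (hqM : ∀ θ x, ‖q θ x‖ ≤ M)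
    (hqm : ∀ x, AEStronglyMeasurable (q · x) μ) (hqL : ∀ θ, LipschitzWith Kq (q θ))
    (hh : Integrable h μ) (h0 : 0 ≤ᵐ[μ] h) (h1 : ∫ θ, h θ ∂μ = 1) (hN : eLpNorm h ⊤ μ ≤ N)
    (hh' : Integrable h' μ) (h0' : 0 ≤ᵐ[μ] h') (h1' : ∫ θ, h' θ ∂μ = 1)
    (hN' : eLpNorm h' ⊤ μ ≤ N) (x x' : X) :
    (eLpNorm (fun θ => h θ * q θ x / ∫ t, h t * q t x ∂μ -
        h' θ * q θ x' / ∫ t, h' t * q t x' ∂μ) ⊤ μ).toReal ≤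
      (M + N * Kq) * (c₁⁻¹ + N * M * μ.real univ / c₁ ^ 2) *
        (dist x x' + (eLpNorm (fun θ => h θ - h' θ) ⊤ μ).toReal) := by
  set Δ := (eLpNorm (fun θ => h θ - h' θ) ⊤ μ).toReal
  have hΔ : ∀ᵐ θ ∂μ, |h θ - h' θ| ≤ Δ := by
    refine ae_norm_le_toReal_eLpNorm_top ((eLpNorm_sub_le hh.1 hh'.1 le_top).trans_lt ?_).ne
    exact ENNReal.add_lt_top.2
      ⟨hN.trans_lt ENNReal.coe_lt_top, hN'.trans_lt ENNReal.coe_lt_top⟩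
  have hint : ∀ g, Integrable g μ → ∀ x, Integrable (fun θ => g θ * q θ x) μ :=
    fun g hg x => hg.mul_bdd (hqm x) (ae_of_all _ (hqM · x))
  have hZ : c₁ ≤ ∫ t, h t * q t x ∂μ :=
    le_integral_mul_of_le hh h0 h1 (hint h hh x) (ae_of_all _ (hq₁ · x))
  have hZ' : c₁ ≤ ∫ t, h' t * q t x' ∂μ :=
    le_integral_mul_of_le hh' h0' h1' (hint h' hh' x') (ae_of_all _ (hq₁ · x'))
  have hA : ∀ᵐ θ ∂μ, |h θ * q θ x - h' θ * q θ x'| ≤ M * Δ + N * Kq * dist x x' := by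
    filter_upwards [hΔ, ae_norm_le_of_eLpNorm_top_le hN'] with θ hθΔ (hθN : |h' θ| ≤ N)
    calc |h θ * q θ x - h' θ * q θ x'|
        = |(h θ - h' θ) * q θ x + h' θ * (q θ x - q θ x')| := by ring_nf
      _ ≤ |h θ - h' θ| * |q θ x| + |h' θ| * |q θ x - q θ x'| := by
        rw [← abs_mul, ← abs_mul]
        exact abs_add_le _ _
      _ ≤ Δ * M + N * (Kq * dist x x') := by
        gcongr
        · exact hqM θ x
        · exact (hqL θ).dist_le_mul x x'
      _ = M * Δ + N * Kq * dist x x' := by ring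
  have hB : ∀ᵐ θ ∂μ, |h' θ * q θ x'| ≤ N * M := by
    filter_upwards [ae_norm_le_of_eLpNorm_top_le hN'] with θ (hθN : |h' θ| ≤ N)
    rw [abs_mul]
    exact mul_le_mul hθN (hqM θ x') (abs_nonneg _) N.2
  have hΔ0 : 0 ≤ Δ := ENNReal.toReal_nonneg
  refine toReal_eLpNorm_top_le_of_ae_bound (by positivity) ?_
  filter_upwards [ae_abs_div_integral_sub_div_integral_le (hint h hh x) (hint h' hh' x') hc₁
    hZ hZ' hA hB] with θ hθ
  calc _ ≤ _ := hθ
    _ = (M * Δ + N * Kq * dist x x') * (c₁⁻¹ + N * M * μ.real univ / c₁ ^ 2) := by ring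
    _ ≤ (M + N * Kq) * (dist x x' + Δ) * (c₁⁻¹ + N * M * μ.real univ / c₁ ^ 2) := by
        gcongr
        have : 0 ≤ (M : ℝ) * dist x x' + N * Kq * Δ := by positivity
        linarith
    _ = _ := by ring

theorem LipschitzWith.mul_of_forall_norm_le {α R : Type*} [PseudoMetricSpace α]
    [SeminormedRing R] {f g : α → R} {Kf Kg Mf Mg : ℝ≥0} (hf : LipschitzWith Kf f)
    (hg : LipschitzWith Kg g) (hfM : ∀ x, ‖f x‖ ≤ Mf) (hgM : ∀ x, ‖g x‖ ≤ Mg) :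
    LipschitzWith (Mf * Kg + Kf * Mg) fun x => f x * g x := by
  refine LipschitzWith.of_dist_le_mul fun x y => ?_
  calc dist (f x * g x) (f y * g y) = ‖f x * (g x - g y) + (f x - f y) * g y‖ := by
        rw [dist_eq_norm, mul_sub, sub_mul, sub_add_sub_cancel]
    _ ≤ ‖f x‖ * dist (g x) (g y) + dist (f x) (f y) * ‖g y‖ := by
        rw [dist_eq_norm, dist_eq_norm]
        exact (norm_add_le _ _).trans (add_le_add (norm_mul_le _ _) (norm_mul_le _ _))
    _ ≤ Mf * (Kg * dist x y) + Kf * dist x y * Mg := by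
        gcongr
        exacts [hfM x, hg.dist_le_mul x y, hf.dist_le_mul x y, hgM y]
    _ = ↑(Mf * Kg + Kf * Mg) * dist x y := by push_cast; ring

theorem isFiniteMeasure_lebOn {d : ℕ} {Θ : Set (EuclideanSpace ℝ (Fin d))}
    (hΘ : MeasurableSet Θ) (hΘfin : volume Θ ≠ ⊤) : IsFiniteMeasure (lebOn Θ) := by
  refine ⟨?_⟩
  rw [lebOn, MeasurableEmbedding.comap_apply (MeasurableEmbedding.subtype_coe hΘ), image_univ,
    Subtype.range_coe]
  exact hΘfin.lt_top

theorem posterior_density_map_supnorm_lipschitz_general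
    {d : ℕ} {X : Type*} [MetricSpace X]
    (Θ : Set (EuclideanSpace ℝ (Fin d))) (hΘc : IsCompact Θ)
    (q : ↥Θ → X → ℝ)
    -- (ii) `q` is `C'`-Lipschitz for the sum metric on `Θ × X`
    (C' : ℝ)
    (hqLip : ∀ θ θ' : ↥Θ, ∀ x x' : X,
      |q θ x - q θ' x'| ≤ C' * (‖(θ : EuclideanSpace ℝ (Fin d)) - θ'‖ + dist x x'))
    -- (iii) `log q` is bounded
    (c₁ c₂ : ℝ) (hc₁ : 0 < c₁)
    (hqbd : ∀ θ x, c₁ ≤ q θ x ∧ q θ x ≤ c₂)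
    -- `H` is a set of probability densities (w.r.t. Lebesgue measure on `Θ`)
    (H : Set (↥Θ → ℝ))
    (hHmeas : ∀ h ∈ H, Measurable h)
    (hHnn : ∀ h ∈ H, ∀ θ, 0 ≤ h θ)
    (hHdens : ∀ h ∈ H, ∫⁻ θ, ENNReal.ofReal (h θ) ∂(lebOn Θ) = 1)
    -- the densities in `H` are uniformly essentially bounded
    (hHbd : ∃ N : ℝ, ∀ h ∈ H, eLpNorm h ⊤ (lebOn Θ) ≤ ENNReal.ofReal N) :
    -- the posterior map is Lipschitz from `(X × H, d_X + d_sup)` to `d_sup`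
    (∃ K : ℝ, 0 ≤ K ∧ ∀ x x' : X, ∀ h ∈ H, ∀ h' ∈ H,
      (eLpNorm (fun θ => postDens q h x θ - postDens q h' x' θ) ⊤ (lebOn Θ)).toReal ≤
        K * (dist x x' + (eLpNorm (fun θ => h θ - h' θ) ⊤ (lebOn Θ)).toReal)) ∧
    -- Lipschitz prior densities give Lipschitz posterior densities
    (∀ h ∈ H, (∃ Kh : NNReal, LipschitzWith Kh h) →
      ∀ x : X, ∃ K' : NNReal, LipschitzWith K' (postDens q h x)) := by
  have := isFiniteMeasure_lebOn hΘc.isClosed.measurableSet hΘc.measure_lt_top.ne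
  have hqLipθ : ∀ x, LipschitzWith C'.toNNReal (q · x) := fun x =>
    LipschitzWith.of_dist_le' fun θ θ' => by
      simpa [Real.dist_eq, Subtype.dist_eq, dist_eq_norm] using hqLip θ θ' x x
  have hqLipX : ∀ θ, LipschitzWith C'.toNNReal (q θ) := fun θ =>
    LipschitzWith.of_dist_le' fun x x' => by simpa [Real.dist_eq] using hqLip θ θ x x'
  have hqM : ∀ θ x, ‖q θ x‖ ≤ c₂.toNNReal := fun θ x => by
    rw [Real.norm_of_nonneg (hc₁.le.trans (hqbd θ x).1)]
    exact (hqbd θ x).2.trans (Real.le_coe_toNNReal c₂)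
  have hHint : ∀ h ∈ H, Integrable h (lebOn Θ) := fun h hH =>
    integrable_of_lintegral_ofReal_eq_one (hHmeas h hH).aestronglyMeasurable
      (ae_of_all _ (hHnn h hH)) (hHdens h hH)
  have hHone : ∀ h ∈ H, ∫ θ, h θ ∂(lebOn Θ) = 1 := fun h hH =>
    integral_eq_one_of_lintegral_ofReal_eq_one (hHmeas h hH).aestronglyMeasurable
      (ae_of_all _ (hHnn h hH)) (hHdens h hH)
  obtain ⟨N, hN⟩ := hHbd
  refine ⟨⟨_, by positivity, fun x x' h hH h' hH' =>
    toReal_eLpNorm_posterior_sub_le (N := N.toNNReal) hc₁ (fun θ x => (hqbd θ x).1) hqM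
      (fun x => (hqLipθ x).continuous.aestronglyMeasurable) hqLipX
      (hHint h hH) (ae_of_all _ (hHnn h hH)) (hHone h hH) (hN h hH)
      (hHint h' hH') (ae_of_all _ (hHnn h' hH')) (hHone h' hH') (hN h' hH') x x'⟩, ?_⟩
  rintro h - ⟨Kh, hKh⟩ x
  have : CompactSpace ↥Θ := isCompact_iff_compactSpace.mp hΘc
  have hhM : ∀ θ, ‖h θ‖ ≤ ‖(⟨h, hKh.continuous⟩ : C(↥Θ, ℝ))‖₊ :=
    ContinuousMap.norm_coe_le_norm ⟨h, hKh.continuous⟩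
  have hpost : postDens q h x = fun θ => (∫ t, h t * q t x ∂lebOn Θ)⁻¹ • (h θ * q θ x) := by
    funext θ
    exact (inv_mul_eq_div _ _).symm
  rw [hpost]
  exact ⟨_, (lipschitzWith_smul _).comp (hKh.mul_of_forall_norm_le (hqLipθ x) hhM (hqM · x))⟩

/-- sup-norm Lipschitz continuity of the posterior map on a family of
absolutely continuous priors with uniformly essentially bounded densities, for a dominated
model with Lipschitz density and bounded log-density; moreover Lipschitz prior densities give
Lipschitz posterior densities. -/
theorem posterior_density_map_supnorm_lipschitz
    {d : ℕ} {X : Type*} [MetricSpace X] [MeasurableSpace X] [BorelSpace X]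
    (Θ : Set (EuclideanSpace ℝ (Fin d))) (hΘc : IsCompact Θ) (hΘvol : 0 < volume Θ)
    (ν : Measure X) [SigmaFinite ν]
    (q : ↥Θ → X → ℝ)
    -- (i) `q(θ,·)` is a probability density with respect to `ν`
    (hdens : ∀ θ : ↥Θ, ∫⁻ x, ENNReal.ofReal (q θ x) ∂ν = 1)
    -- (ii) `q` is `C'`-Lipschitz for the sum metric on `Θ × X`
    (C' : ℝ) (hC' : 0 ≤ C')
    (hqLip : ∀ θ θ' : ↥Θ, ∀ x x' : X,
      |q θ x - q θ' x'| ≤ C' * (‖(θ : EuclideanSpace ℝ (Fin d)) - θ'‖ + dist x x'))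
    -- (iii) `log q` is bounded
    (c₁ c₂ : ℝ) (hc₁ : 0 < c₁)
    (hqbd : ∀ θ x, c₁ ≤ q θ x ∧ q θ x ≤ c₂)
    -- `H` is a set of probability densities (w.r.t. Lebesgue measure on `Θ`)
    (H : Set (↥Θ → ℝ))
    (hHmeas : ∀ h ∈ H, Measurable h)
    (hHnn : ∀ h ∈ H, ∀ θ, 0 ≤ h θ)
    (hHdens : ∀ h ∈ H, ∫⁻ θ, ENNReal.ofReal (h θ) ∂(lebOn Θ) = 1)
    -- the densities in `H` are uniformly essentially bounded
    (hHbd : ∃ N : ℝ, ∀ h ∈ H, eLpNorm h ⊤ (lebOn Θ) ≤ ENNReal.ofReal N) :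
    -- the posterior map is Lipschitz from `(X × H, d_X + d_sup)` to `d_sup`
    (∃ K : ℝ, 0 ≤ K ∧ ∀ x x' : X, ∀ h ∈ H, ∀ h' ∈ H,
      (eLpNorm (fun θ => postDens q h x θ - postDens q h' x' θ) ⊤ (lebOn Θ)).toReal ≤
        K * (dist x x' + (eLpNorm (fun θ => h θ - h' θ) ⊤ (lebOn Θ)).toReal)) ∧
    -- Lipschitz prior densities give Lipschitz posterior densities
    (∀ h ∈ H, (∃ Kh : NNReal, LipschitzWith Kh h) →
      ∀ x : X, ∃ K' : NNReal, LipschitzWith K' (postDens q h x)) :=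
  posterior_density_map_supnorm_lipschitz_general Θ hΘc q C' hqLip c₁ c₂ hc₁ hqbd H hHmeas hHnn
    hHdens hHbd
end

section
/- Consider the Bernoulli model: Θ = [0,1], X = {0,1} with a metric d_X, and q(θ,x) = θ^x (1−θ)^{1−x}. For π ∈ P([0,1]) with ∫ q(θ,x) π(dθ) > 0 define the posterior Post(x,π)(B) = (∫_B q(θ,x) π(dθ)) / (∫_{[0,1]} q(θ,x) π(dθ)). Fix a, b > 0 and let AGD(a,b) = { π ∈ P([0,1]) : π([0,a] ∪ [1−a,1]) ≤ 1−b }. Then the map (x,π) ↦ Post(x,π) from (X × AGD(a,b), d_X + W1) to (P([0,1]), W1) is Lipschitz. -/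
open MeasureTheory

/-- The Wasserstein-1 distance between two measures, via Kantorovich–Rubinstein duality. -/
noncomputable def W1 {T : Type*} [MeasurableSpace T] [PseudoMetricSpace T]
    (μ ν : Measure T) : ℝ :=
  sSup { r : ℝ | ∃ f : T → ℝ, LipschitzWith 1 f ∧
    r = |(∫ t, f t ∂μ) - ∫ t, f t ∂ν| }

/-- The Bernoulli parameter space `[0,1]`. -/
abbrev BernΘ : Set ℝ := Set.Icc (0:ℝ) 1

/-- The Bernoulli conditional density `q(θ,x) = θ^x (1−θ)^{1−x}` on `{0,1}` (encoded as
`Bool`). -/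
noncomputable def bq (θ : ↥BernΘ) (x : Bool) : ℝ := if x then (θ : ℝ) else 1 - (θ : ℝ)

/-- The Bernoulli posterior of prior `π` given observation `x`. -/
noncomputable def bPost (π : ProbabilityMeasure ↥BernΘ) (x : Bool) : Measure ↥BernΘ :=
  (∫⁻ θ, ENNReal.ofReal (bq θ x) ∂(π : Measure ↥BernΘ))⁻¹ •
    (π : Measure ↥BernΘ).withDensity fun θ => ENNReal.ofReal (bq θ x)

/-- `AGD a b`: the set of priors on `[0,1]` putting mass at most `1 − b` on
`[0,a] ∪ [1−a,1]`. -/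
def AGD (a b : ℝ) : Set (ProbabilityMeasure ↥BernΘ) :=
  {π | ((π : Measure ↥BernΘ)
      {θ : ↥BernΘ | (θ : ℝ) ≤ a ∨ 1 - a ≤ (θ : ℝ)}).toReal ≤ 1 - b}

/-!
For a fixed observation `x`, the posterior integral of a test function `f` is the ratio
`∫ f q dπ / ∫ q dπ`. After centering, a 1-Lipschitz `f` on `[0,1]` is bounded by `1`, so
`f q` is 2-Lipschitz and `q` is 1-Lipschitz: numerator and denominator move by at most
`2 W1(π,π')` and `W1(π,π')`, while on `AGD(a,b)` the denominator is at least `a b`.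
The quotient therefore moves by at most `3 W1(π,π') / (a b)`. Different observations are
at the fixed positive distance `d_X(true, false)`, and `W1 ≤ 2` on `[0,1]`.
-/

open scoped NNReal

lemma abs_integral_sub_integral_le_of_abs_le {T : Type*} [MeasurableSpace T] {μ ν : Measure T}
    [IsProbabilityMeasure μ] [IsProbabilityMeasure ν] {f : T → ℝ} {C : ℝ} (hf : ∀ t, |f t| ≤ C) :
    |∫ t, f t ∂μ - ∫ t, f t ∂ν| ≤ 2 * C := by
  have hbound : ∀ κ : Measure T, IsProbabilityMeasure κ → |∫ t, f t ∂κ| ≤ C := fun κ _ => by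
    simpa using norm_integral_le_of_norm_le_const (μ := κ) (f := f) (C := C)
      (.of_forall fun t => by simpa only [Real.norm_eq_abs] using hf t)
  linarith [abs_sub (∫ t, f t ∂μ) (∫ t, f t ∂ν), hbound μ ‹_›, hbound ν ‹_›]

section W1

variable {T : Type*} [PseudoMetricSpace T] [MeasurableSpace T] [OpensMeasurableSpace T]
  {μ ν : Measure T} [IsProbabilityMeasure μ] [IsProbabilityMeasure ν] {D : ℝ}

lemma LipschitzWith.integrable {K : ℝ≥0} {f : T → ℝ} (hf : LipschitzWith K f)
    (hD : ∀ s t : T, dist s t ≤ D) : Integrable f μ := by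
  obtain ⟨t₀⟩ := nonempty_of_isProbabilityMeasure μ
  refine .of_bound hf.continuous.aestronglyMeasurable (‖f t₀‖ + K * D) (.of_forall fun t => ?_)
  calc ‖f t‖ ≤ ‖f t₀‖ + dist (f t) (f t₀) := norm_le_norm_add_const_of_dist_le le_rfl
    _ ≤ ‖f t₀‖ + K * D := by gcongr; exact (hf.dist_le_mul t t₀).trans (by gcongr; exact hD t t₀)

/-- Integrals against probability measures only see `f` up to an additive constant, and
`f - f t₀` is bounded by the diameter. -/
lemma abs_integral_sub_integral_le_of_forall_bounded (hD : ∀ s t : T, dist s t ≤ D) {r : ℝ}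
    (hr : ∀ g : T → ℝ, LipschitzWith 1 g → (∀ t, |g t| ≤ D) →
      |∫ t, g t ∂μ - ∫ t, g t ∂ν| ≤ r)
    {f : T → ℝ} (hf : LipschitzWith 1 f) : |∫ t, f t ∂μ - ∫ t, f t ∂ν| ≤ r := by
  obtain ⟨t₀⟩ := nonempty_of_isProbabilityMeasure μ
  have hg : LipschitzWith 1 fun t => f t - f t₀ := by
    simpa using hf.sub (LipschitzWith.const (f t₀))
  have hgb : ∀ t, |f t - f t₀| ≤ D := fun t => by
    simpa [Real.dist_eq] using (hf.dist_le_mul t t₀).trans (by simpa using hD t t₀)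
  have hshift : ∫ t, f t ∂μ - ∫ t, f t ∂ν = ∫ t, (f t - f t₀) ∂μ - ∫ t, (f t - f t₀) ∂ν := by
    rw [integral_sub (hf.integrable hD) (integrable_const _),
      integral_sub (hf.integrable hD) (integrable_const _)]
    simp
  rw [hshift]
  exact hr _ hg hgb

lemma W1_bddAbove (hD : ∀ s t : T, dist s t ≤ D) :
    BddAbove {r : ℝ | ∃ f : T → ℝ, LipschitzWith 1 f ∧
      r = |(∫ t, f t ∂μ) - ∫ t, f t ∂ν|} := by
  refine ⟨2 * D, ?_⟩
  rintro _ ⟨f, hf, rfl⟩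
  exact abs_integral_sub_integral_le_of_forall_bounded hD
    (fun _ _ hg => abs_integral_sub_integral_le_of_abs_le hg) hf

lemma abs_integral_sub_integral_le_W1 (hD : ∀ s t : T, dist s t ≤ D) {f : T → ℝ}
    (hf : LipschitzWith 1 f) : |∫ t, f t ∂μ - ∫ t, f t ∂ν| ≤ W1 μ ν :=
  le_csSup (W1_bddAbove hD) ⟨f, hf, rfl⟩

lemma W1_nonneg (hD : ∀ s t : T, dist s t ≤ D) : 0 ≤ W1 μ ν := by
  simpa using abs_integral_sub_integral_le_W1 (μ := μ) (ν := ν) hD (LipschitzWith.const' 0)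

lemma W1_le_of_forall_bounded (hD : ∀ s t : T, dist s t ≤ D) {r : ℝ}
    (hr : ∀ g : T → ℝ, LipschitzWith 1 g → (∀ t, |g t| ≤ D) →
      |∫ t, g t ∂μ - ∫ t, g t ∂ν| ≤ r) : W1 μ ν ≤ r := by
  refine csSup_le ⟨_, 0, LipschitzWith.const' 0, rfl⟩ ?_
  rintro _ ⟨f, hf, rfl⟩
  exact abs_integral_sub_integral_le_of_forall_bounded hD hr hf

lemma W1_le_two_mul (hD : ∀ s t : T, dist s t ≤ D) : W1 μ ν ≤ 2 * D :=
  W1_le_of_forall_bounded hD fun _ _ hg => abs_integral_sub_integral_le_of_abs_le hg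

lemma LipschitzWith.abs_integral_sub_integral_le (hD : ∀ s t : T, dist s t ≤ D) {K : ℝ≥0}
    {f : T → ℝ} (hf : LipschitzWith K f) :
    |∫ t, f t ∂μ - ∫ t, f t ∂ν| ≤ K * W1 μ ν := by
  rcases eq_or_ne K 0 with rfl | hK
  · obtain ⟨t₀⟩ := nonempty_of_isProbabilityMeasure μ
    have hconst : f = fun _ => f t₀ := funext fun t => (LipschitzWith.zero_iff f).1 hf t t₀
    rw [hconst]
    simp
  · have hK' : (0 : ℝ) < K := by positivity
    have hscaled : LipschitzWith 1 fun t => (K : ℝ)⁻¹ * f t := by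
      refine LipschitzWith.of_dist_le_mul fun s t => ?_
      rw [Real.dist_eq, ← mul_sub, abs_mul, abs_of_pos (inv_pos.2 hK'), NNReal.coe_one, one_mul,
        inv_mul_le_iff₀ hK', ← Real.dist_eq]
      exact hf.dist_le_mul s t
    have h := abs_integral_sub_integral_le_W1 (μ := μ) (ν := ν) hD hscaled
    rw [integral_const_mul, integral_const_mul, ← mul_sub, abs_mul, abs_of_pos (inv_pos.2 hK'),
      inv_mul_le_iff₀ hK'] at h
    exact h

end W1

lemma dist_le_one_bernΘ (s t : ↥BernΘ) : dist s t ≤ 1 :=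
  Real.dist_le_of_mem_Icc_01 s.2 t.2

lemma bq_nonneg (θ : ↥BernΘ) (x : Bool) : 0 ≤ bq θ x := by
  cases x <;> simp [bq, θ.2.1, θ.2.2]

lemma bq_le_one (θ : ↥BernΘ) (x : Bool) : bq θ x ≤ 1 := by
  cases x <;> simp [bq, θ.2.1, θ.2.2]

lemma lipschitzWith_bq (x : Bool) : LipschitzWith 1 fun θ : ↥BernΘ => bq θ x := by
  cases x
  · simpa [bq] using (LipschitzWith.const (1 : ℝ)).sub (LipschitzWith.subtype_val _)
  · exact LipschitzWith.subtype_val _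

lemma lipschitzWith_mul_bq {f : ↥BernΘ → ℝ} (hf : LipschitzWith 1 f) (hfb : ∀ θ, |f θ| ≤ 1)
    (x : Bool) : LipschitzWith 2 fun θ => f θ * bq θ x := by
  refine LipschitzWith.of_dist_le_mul fun s t => ?_
  have hq : |bq s x - bq t x| ≤ dist s t := by
    simpa [Real.dist_eq] using (lipschitzWith_bq x).dist_le_mul s t
  have hf' : |f s - f t| ≤ dist s t := by simpa [Real.dist_eq] using hf.dist_le_mul s t
  have hqt : |bq t x| ≤ 1 := abs_le.2 ⟨by linarith [bq_nonneg t x], bq_le_one t x⟩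
  calc dist (f s * bq s x) (f t * bq t x)
      = |f s * (bq s x - bq t x) + bq t x * (f s - f t)| := by rw [Real.dist_eq]; ring_nf
    _ ≤ |f s| * |bq s x - bq t x| + |bq t x| * |f s - f t| := by
        rw [← abs_mul, ← abs_mul]; exact abs_add_le _ _
    _ ≤ 1 * dist s t + 1 * dist s t := by gcongr; exact hfb s
    _ = (2 : ℝ≥0) * dist s t := by push_cast; ring

noncomputable def bZ (π : ProbabilityMeasure ↥BernΘ) (x : Bool) : ℝ :=
  ∫ θ, bq θ x ∂(π : Measure ↥BernΘ)

lemma lintegral_ofReal_bq (π : ProbabilityMeasure ↥BernΘ) (x : Bool) :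
    ∫⁻ θ, ENNReal.ofReal (bq θ x) ∂(π : Measure ↥BernΘ) = ENNReal.ofReal (bZ π x) :=
  (ofReal_integral_eq_lintegral_ofReal ((lipschitzWith_bq x).integrable dist_le_one_bernΘ)
    (.of_forall fun θ => bq_nonneg θ x)).symm

lemma mul_le_bZ_of_mem_AGD {a b : ℝ} (ha : 0 ≤ a) {π : ProbabilityMeasure ↥BernΘ}
    (hπ : π ∈ AGD a b) (x : Bool) : a * b ≤ bZ π x := by
  set G : Set ↥BernΘ := {θ | (θ : ℝ) ≤ a ∨ 1 - a ≤ (θ : ℝ)}ᶜ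
  have hG : MeasurableSet G :=
    ((measurableSet_le measurable_subtype_coe measurable_const).union
      (measurableSet_le measurable_const measurable_subtype_coe)).compl
  have hmass : b ≤ (π : Measure ↥BernΘ).real G := by
    rw [measureReal_compl hG.of_compl, probReal_univ]
    exact le_sub_comm.1 hπ
  have hpt : ∀ θ, G.indicator (fun _ => a) θ ≤ bq θ x := by
    intro θ
    by_cases hθ : θ ∈ G
    · rw [Set.indicator_of_mem hθ]
      have hθ' : ¬((θ : ℝ) ≤ a ∨ 1 - a ≤ (θ : ℝ)) := hθ
      simp only [not_or, not_le] at hθ'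
      cases x <;> simp [bq] <;> linarith [hθ'.1, hθ'.2]
    · rw [Set.indicator_of_notMem hθ]
      exact bq_nonneg θ x
  calc a * b ≤ (π : Measure ↥BernΘ).real G * a := by rw [mul_comm]; gcongr
    _ = ∫ θ, G.indicator (fun _ => a) θ ∂(π : Measure ↥BernΘ) := by
        rw [integral_indicator_const _ hG, smul_eq_mul]
    _ ≤ bZ π x := integral_mono ((integrable_const a).indicator hG)
        ((lipschitzWith_bq x).integrable dist_le_one_bernΘ) hpt

lemma isProbabilityMeasure_bPost {π : ProbabilityMeasure ↥BernΘ} {x : Bool} (hZ : 0 < bZ π x) :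
    IsProbabilityMeasure (bPost π x) := by
  constructor
  rw [bPost, Measure.smul_apply, withDensity_apply _ MeasurableSet.univ, setLIntegral_univ,
    lintegral_ofReal_bq, smul_eq_mul]
  exact ENNReal.inv_mul_cancel (ENNReal.ofReal_pos.2 hZ).ne' ENNReal.ofReal_ne_top

lemma integral_bPost (π : ProbabilityMeasure ↥BernΘ) (x : Bool) (f : ↥BernΘ → ℝ) :
    ∫ θ, f θ ∂(bPost π x) = (∫ θ, f θ * bq θ x ∂(π : Measure ↥BernΘ)) / bZ π x := by
  have hmeas : Measurable fun θ : ↥BernΘ => (bq θ x).toNNReal :=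
    measurable_real_toNNReal.comp (lipschitzWith_bq x).continuous.measurable
  rw [bPost, lintegral_ofReal_bq, integral_smul_measure, ENNReal.toReal_inv,
    ENNReal.toReal_ofReal (show 0 ≤ bZ π x from integral_nonneg fun θ => bq_nonneg θ x),
    show (fun θ => ENNReal.ofReal (bq θ x)) = fun θ => ((bq θ x).toNNReal : ENNReal) from rfl,
    integral_withDensity_eq_integral_smul hmeas, smul_eq_mul, div_eq_inv_mul]
  congr 2
  funext θ
  rw [NNReal.smul_def, smul_eq_mul, Real.coe_toNNReal _ (bq_nonneg θ x), mul_comm]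

lemma abs_integral_mul_bq_le (π : ProbabilityMeasure ↥BernΘ) (x : Bool) {f : ↥BernΘ → ℝ}
    (hf : LipschitzWith 1 f) (hfb : ∀ θ, |f θ| ≤ 1) :
    |∫ θ, f θ * bq θ x ∂(π : Measure ↥BernΘ)| ≤ bZ π x := by
  refine (abs_integral_le_integral_abs).trans (integral_mono
    ((lipschitzWith_mul_bq hf hfb x).integrable dist_le_one_bernΘ).abs
    ((lipschitzWith_bq x).integrable dist_le_one_bernΘ) fun θ => ?_)
  rw [abs_mul, abs_of_nonneg (bq_nonneg θ x)]
  exact mul_le_of_le_one_left (bq_nonneg θ x) (hfb θ)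

lemma abs_div_sub_div_le_s19 {N N' Z Z' c : ℝ} (hc : 0 < c) (hZ : c ≤ Z) (hZ' : c ≤ Z')
    (hN' : |N'| ≤ Z') : |N / Z - N' / Z'| ≤ (|N - N'| + |Z - Z'|) / c := by
  have hZpos : 0 < Z := hc.trans_le hZ
  have hZ'pos : 0 < Z' := hc.trans_le hZ'
  have hratio : |N' / Z'| ≤ 1 := by rw [abs_div, abs_of_pos hZ'pos]; exact div_le_one_of_le₀ hN' hZ'pos.le
  have hsplit : N / Z - N' / Z' = ((N - N') + N' / Z' * (Z' - Z)) / Z := by field_simp; ring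
  calc |N / Z - N' / Z'| ≤ (|N - N'| + |N' / Z'| * |Z - Z'|) / Z := by
        rw [hsplit, abs_div, abs_of_pos hZpos, abs_sub_comm Z Z', ← abs_mul]
        gcongr
        exact abs_add_le _ _
    _ ≤ (|N - N'| + 1 * |Z - Z'|) / Z := by gcongr
    _ ≤ (|N - N'| + |Z - Z'|) / c := by rw [one_mul]; gcongr

lemma W1_bPost_le {π π' : ProbabilityMeasure ↥BernΘ} {x : Bool} {c : ℝ} (hc : 0 < c)
    (hZ : c ≤ bZ π x) (hZ' : c ≤ bZ π' x) :
    W1 (bPost π x) (bPost π' x) ≤ 3 / c * W1 (π : Measure ↥BernΘ) (π' : Measure ↥BernΘ) := by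
  have := isProbabilityMeasure_bPost (hc.trans_le hZ)
  have := isProbabilityMeasure_bPost (hc.trans_le hZ')
  refine W1_le_of_forall_bounded dist_le_one_bernΘ fun f hf hfb => ?_
  have hN := (lipschitzWith_mul_bq hf hfb x).abs_integral_sub_integral_le
    (μ := (π : Measure ↥BernΘ)) (ν := π') dist_le_one_bernΘ
  have hZdiff := (lipschitzWith_bq x).abs_integral_sub_integral_le
    (μ := (π : Measure ↥BernΘ)) (ν := π') dist_le_one_bernΘ
  rw [integral_bPost, integral_bPost]
  calc _ ≤ _ := abs_div_sub_div_le_s19 hc hZ hZ' (abs_integral_mul_bq_le π' x hf hfb)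
    _ ≤ (2 * W1 (π : Measure ↥BernΘ) π' + 1 * W1 (π : Measure ↥BernΘ) π') / c := by
        gcongr
        · exact_mod_cast hN
        · exact_mod_cast hZdiff
    _ = 3 / c * W1 (π : Measure ↥BernΘ) π' := by ring

lemma dist_bool_of_ne [PseudoMetricSpace Bool] {x x' : Bool} (h : x ≠ x') :
    dist x x' = dist true false := by
  cases x <;> cases x' <;> simp_all [dist_comm]

/-- for the Bernoulli model and any `a, b > 0`, the posterior map
`(x,π) ↦ Post(x,π)` is Lipschitz from `({0,1} × AGD(a,b), d_X + W1)` to `(P([0,1]), W1)`,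
for any metric `d_X` on the two-point sample space. -/
theorem bernoulli_posterior_lipschitz_on_AGD
    [MetricSpace Bool]
    (a b : ℝ) (ha : 0 < a) (hb : 0 < b) :
    ∃ K : ℝ, 0 ≤ K ∧ ∀ (x x' : Bool) (π π' : ProbabilityMeasure ↥BernΘ),
      π ∈ AGD a b → π' ∈ AGD a b →
      W1 (bPost π x) (bPost π' x') ≤
        K * (dist x x' + W1 (π : Measure ↥BernΘ) (π' : Measure ↥BernΘ)) := by
  have hab : 0 < a * b := mul_pos ha hb
  have hd : 0 < dist true false := dist_pos.2 (by decide)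
  refine ⟨2 / dist true false + 3 / (a * b), by positivity, fun x x' π π' hπ hπ' => ?_⟩
  have hZ := mul_le_bZ_of_mem_AGD ha.le hπ
  have hZ' := mul_le_bZ_of_mem_AGD ha.le hπ'
  have hW := W1_nonneg (μ := (π : Measure ↥BernΘ)) (ν := π') dist_le_one_bernΘ
  rcases eq_or_ne x x' with rfl | hxx'
  · calc W1 (bPost π x) (bPost π' x) ≤ 3 / (a * b) * W1 (π : Measure ↥BernΘ) π' :=
          W1_bPost_le hab (hZ x) (hZ' x)
      _ ≤ _ := by rw [dist_self, zero_add]; gcongr; simp only [le_add_iff_nonneg_left]; positivity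
  · have := isProbabilityMeasure_bPost (hab.trans_le (hZ x))
    have := isProbabilityMeasure_bPost (hab.trans_le (hZ' x'))
    calc W1 (bPost π x) (bPost π' x') ≤ 2 * 1 := W1_le_two_mul dist_le_one_bernΘ
      _ = 2 / dist true false * dist x x' := by rw [dist_bool_of_ne hxx']; field_simp
      _ ≤ _ := by gcongr <;> linarith [div_nonneg zero_le_three hab.le]
end
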